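/- The barycenter (with respect to 2-dimensional Lebesgue measure) of the polytope P₂ equals (2/21, 2/21); that is, the vector-valued integral ∫_{P₂} x dx equals (2/21, 2/21) times the Lebesgue measure of P₂. -/

import Mathlib

open MeasureTheory
section Aux
open Set


noncomputable def fP (x : ℝ) : ℝ := max (-1 - x) (-1)

def SP : Set (ℝ × ℝ) := {p | p.1 ∈ Icc (-1:ℝ) 1 ∧ p.2 ∈ Icc (fP p.1) 1}

lemma mem_SP {p : ℝ × ℝ} : p ∈ SP ↔ -1 ≤ p.1 ∧ p.1 ≤ 1 ∧ -1 - p.1 ≤ p.2 ∧ -1 ≤ p.2 ∧ p.2 ≤ 1 := by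
  simp [SP, fP, mem_Icc, max_le_iff, and_assoc]

lemma seg2 {a b p : ℝ × ℝ} (t : ℝ) (h0 : 0 ≤ t) (h1 : t ≤ 1)
    (h : p = (1 - t) • a + t • b) : p ∈ segment ℝ a b :=
  ⟨1 - t, t, by linarith, h0, by ring, h.symm⟩

lemma vert_seg {x a b y : ℝ} (h1 : a ≤ y) (h2 : y ≤ b) :
    ((x, y) : ℝ × ℝ) ∈ segment ℝ (x, a) (x, b) := by
  have hy : y ∈ segment ℝ a b := by
    rw [segment_eq_Icc (h1.trans h2)]; exact ⟨h1, h2⟩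
  obtain ⟨u, v, hu, hv, huv, h⟩ := hy
  simp only [smul_eq_mul] at h
  exact ⟨u, v, hu, hv, huv, by
    simp only [Prod.smul_mk, smul_eq_mul, Prod.mk_add_mk, Prod.mk.injEq]
    exact ⟨by rw [← add_mul, huv, one_mul], h⟩⟩

lemma hull_eq : convexHull ℝ {((0:ℝ), (-1:ℝ)), (-1, 0), (-1, 1), (1, 1), (1, -1)} = SP := by
  apply le_antisymm
  · apply convexHull_min
    · intro p hp
      simp only [mem_insert_iff, mem_singleton_iff] at hp
      rcases hp with h|h|h|h|h <;> subst h <;> rw [mem_SP] <;> norm_num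
    · intro p hp q hq a b ha hb hab
      rw [mem_SP] at *
      simp only [Prod.smul_fst, Prod.smul_snd, Prod.fst_add, Prod.snd_add, smul_eq_mul]
      refine ⟨?_, ?_, ?_, ?_, ?_⟩ <;> nlinarith [hp.1, hp.2.1, hp.2.2.1, hp.2.2.2.1, hp.2.2.2.2,
        hq.1, hq.2.1, hq.2.2.1, hq.2.2.2.1, hq.2.2.2.2]
  · intro p hp
    rw [mem_SP] at hp
    obtain ⟨hx1, hx2, hy1, hy2, hy3⟩ := hp
    set C := convexHull ℝ ({((0:ℝ), (-1:ℝ)), (-1, 0), (-1, 1), (1, 1), (1, -1)} : Set (ℝ × ℝ))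
    have hv : ∀ q ∈ ({((0:ℝ), (-1:ℝ)), (-1, 0), (-1, 1), (1, 1), (1, -1)} : Set (ℝ × ℝ)), q ∈ C :=
      fun q hq => subset_convexHull ℝ _ hq
    have hT : ((p.1, (1:ℝ)) : ℝ × ℝ) ∈ C := by
      refine (convex_convexHull ℝ _).segment_subset (hv (-1,1) (by simp)) (hv (1,1) (by simp))
        (seg2 ((p.1 + 1)/2) (by linarith) (by linarith) ?_)
      simp only [Prod.smul_mk, smul_eq_mul, Prod.mk_add_mk, Prod.mk.injEq]
      constructor <;> ring
    have hB : ((p.1, fP p.1) : ℝ × ℝ) ∈ C := by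
      rcases le_or_gt p.1 0 with h | h
      · have hf : fP p.1 = -1 - p.1 := max_eq_left (by linarith)
        rw [hf]
        refine (convex_convexHull ℝ _).segment_subset (hv (-1,0) (by simp)) (hv (0,-1) (by simp))
          (seg2 (p.1 + 1) (by linarith) (by linarith) ?_)
        simp only [Prod.smul_mk, smul_eq_mul, Prod.mk_add_mk, Prod.mk.injEq]
        constructor <;> ring
      · have hf : fP p.1 = -1 := max_eq_right (by linarith)
        rw [hf]
        refine (convex_convexHull ℝ _).segment_subset (hv (0,-1) (by simp)) (hv (1,-1) (by simp))
          (seg2 p.1 (by linarith) hx2 ?_)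
        simp only [Prod.smul_mk, smul_eq_mul, Prod.mk_add_mk, Prod.mk.injEq]
        constructor <;> ring
    have : ((p.1, p.2) : ℝ × ℝ) ∈ segment ℝ (p.1, fP p.1) (p.1, 1) := by
      apply vert_seg _ hy3
      simp [fP, max_le_iff]; constructor <;> linarith
    exact (convex_convexHull ℝ _).segment_subset hB hT this


lemma SP_compact : IsCompact SP := by
  rw [← hull_eq]
  exact (Set.toFinite _).isCompact_convexHull ℝ

lemma SP_meas : MeasurableSet SP := SP_compact.isClosed.measurableSet

lemma fubini_SP (g : ℝ → ℝ → ℝ) (hg : Continuous fun p : ℝ × ℝ => g p.1 p.2) :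
    ∫ p in SP, g p.1 p.2 = ∫ x in Icc (-1:ℝ) 1, ∫ y in Icc (fP x) 1, g x y := by
  have hint : IntegrableOn (fun p : ℝ × ℝ => g p.1 p.2) SP volume :=
    hg.continuousOn.integrableOn_compact SP_compact
  have hint' : Integrable (SP.indicator fun p : ℝ × ℝ => g p.1 p.2) (volume.prod volume) := by
    rw [← Measure.volume_eq_prod]
    exact (integrable_indicator_iff SP_meas).2 hint
  rw [← integral_indicator SP_meas, Measure.volume_eq_prod, MeasureTheory.integral_prod _ hint',
    ← integral_indicator measurableSet_Icc]
  congr 1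
  funext x
  by_cases hx : x ∈ Icc (-1:ℝ) 1
  · rw [indicator_of_mem hx, ← integral_indicator measurableSet_Icc]
    congr 1
    funext y
    by_cases hy : y ∈ Icc (fP x) 1
    · rw [indicator_of_mem hy, indicator_of_mem (show ((x,y) : ℝ × ℝ) ∈ SP from ⟨hx, hy⟩)]
    · rw [indicator_of_notMem hy, indicator_of_notMem (fun h => hy h.2)]
  · rw [indicator_of_notMem hx]
    have h0 : ∀ y : ℝ, SP.indicator (fun p : ℝ × ℝ => g p.1 p.2) (x, y) = 0 :=
      fun y => indicator_of_notMem (fun h => hx h.1) _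
    simp [h0]

lemma inner_const (a c : ℝ) (ha : a ≤ 1) : ∫ _ in Icc a 1, c = (1 - a) * c := by
  rw [setIntegral_const, Real.volume_real_Icc_of_le ha, smul_eq_mul]

lemma inner_id (a : ℝ) (ha : a ≤ 1) : ∫ y in Icc a 1, y = (1 - a^2)/2 := by
  rw [integral_Icc_eq_integral_Ioc, ← intervalIntegral.integral_of_le ha,
    integral_id]
  ring

@[fun_prop] lemma fP_cont : Continuous fP := (continuous_const.sub continuous_id).max continuous_const

lemma fP_le_one {x : ℝ} (hx : x ∈ Icc (-1:ℝ) 1) : fP x ≤ 1 := by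
  have := hx.1
  simp only [fP, max_le_iff]
  constructor <;> linarith

lemma fP_left {x : ℝ} (hx : x ∈ Icc (-1:ℝ) 0) : fP x = -1 - x :=
  max_eq_left (by linarith [hx.2])

lemma fP_right {x : ℝ} (hx : x ∈ Icc (0:ℝ) 1) : fP x = -1 :=
  max_eq_right (by linarith [hx.1])

lemma poly2 (a b c0 c1 c2 : ℝ) :
    ∫ x in a..b, (c0 + c1 * x + c2 * x ^ 2) =
      c0 * (b - a) + c1 * (b ^ 2 - a ^ 2) / 2 + c2 * (b ^ 3 - a ^ 3) / 3 := by
  have h1 : IntervalIntegrable (fun _ : ℝ => c0) volume a b := intervalIntegrable_const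
  have h2 : IntervalIntegrable (fun x : ℝ => c1 * x) volume a b :=
    (continuous_const.mul continuous_id).intervalIntegrable _ _
  have h3 : IntervalIntegrable (fun x : ℝ => c2 * x ^ 2) volume a b :=
    (continuous_const.mul (continuous_pow 2)).intervalIntegrable _ _
  rw [intervalIntegral.integral_add (h1.add h2) h3, intervalIntegral.integral_add h1 h2,
    intervalIntegral.integral_const, intervalIntegral.integral_const_mul,
    intervalIntegral.integral_const_mul, integral_id, integral_pow]
  push_cast
  simp only [smul_eq_mul]
  ring

lemma outer_split (h : ℝ → ℝ) (hcont : Continuous h) :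
    ∫ x in Icc (-1:ℝ) 1, h x = (∫ x in (-1:ℝ)..0, h x) + ∫ x in (0:ℝ)..1, h x := by
  rw [integral_Icc_eq_integral_Ioc, ← intervalIntegral.integral_of_le (by norm_num : (-1:ℝ) ≤ 1),
    ← intervalIntegral.integral_add_adjacent_intervals (hcont.intervalIntegrable _ _)
      (hcont.intervalIntegrable _ _)]

lemma piece_left (h g : ℝ → ℝ) (heq : ∀ x ∈ Icc (-1:ℝ) 0, h x = g x) :
    ∫ x in (-1:ℝ)..0, h x = ∫ x in (-1:ℝ)..0, g x :=
  intervalIntegral.integral_congr fun x hx =>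
    heq x (by rwa [uIcc_of_le (by norm_num : (-1:ℝ) ≤ 0)] at hx)

lemma piece_right (h g : ℝ → ℝ) (heq : ∀ x ∈ Icc (0:ℝ) 1, h x = g x) :
    ∫ x in (0:ℝ)..1, h x = ∫ x in (0:ℝ)..1, g x :=
  intervalIntegral.integral_congr fun x hx =>
    heq x (by rwa [uIcc_of_le (by norm_num : (0:ℝ) ≤ 1)] at hx)

lemma area_SP : ∫ _ in SP, (1:ℝ) = 7/2 := by
  have h : (∫ _ in SP, (1:ℝ)) = ∫ x in Icc (-1:ℝ) 1, ∫ _ in Icc (fP x) 1, (1:ℝ) :=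
    fubini_SP (fun _ _ => 1) continuous_const
  have p1 : ∫ x in (-1:ℝ)..0, (1 - fP x) * 1 = 3/2 := by
    rw [piece_left _ (fun x => 2 + 1 * x + 0 * x ^ 2)
      (fun x hx => by rw [fP_left hx]; ring), poly2]
    norm_num
  have p2 : ∫ x in (0:ℝ)..1, (1 - fP x) * 1 = 2 := by
    rw [piece_right _ (fun x => 2 + 0 * x + 0 * x ^ 2)
      (fun x hx => by rw [fP_right hx]; ring), poly2]
    norm_num
  rw [h, setIntegral_congr_fun measurableSet_Icc
      (g := fun x => (1 - fP x) * 1) (fun x hx => inner_const (fP x) 1 (fP_le_one hx)),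
    outer_split (fun x => (1 - fP x) * 1) (by fun_prop), p1, p2]
  norm_num

lemma fst_SP : ∫ p in SP, p.1 = 1/3 := by
  have h : (∫ p in SP, p.1) = ∫ x in Icc (-1:ℝ) 1, ∫ _ in Icc (fP x) 1, x :=
    fubini_SP (fun x _ => x) continuous_fst
  have p1 : ∫ x in (-1:ℝ)..0, (1 - fP x) * x = -2/3 := by
    rw [piece_left _ (fun x => 0 + 2 * x + 1 * x ^ 2)
      (fun x hx => by rw [fP_left hx]; ring), poly2]
    norm_num
  have p2 : ∫ x in (0:ℝ)..1, (1 - fP x) * x = 1 := by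
    rw [piece_right _ (fun x => 0 + 2 * x + 0 * x ^ 2)
      (fun x hx => by rw [fP_right hx]; ring), poly2]
    norm_num
  rw [h, setIntegral_congr_fun measurableSet_Icc
      (g := fun x => (1 - fP x) * x) (fun x hx => inner_const (fP x) x (fP_le_one hx)),
    outer_split (fun x => (1 - fP x) * x) (by fun_prop), p1, p2]
  norm_num

lemma snd_SP : ∫ p in SP, p.2 = 1/3 := by
  have h : (∫ p in SP, p.2) = ∫ x in Icc (-1:ℝ) 1, ∫ y in Icc (fP x) 1, y :=
    fubini_SP (fun _ y => y) continuous_snd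
  have p1 : ∫ x in (-1:ℝ)..0, (1 - fP x ^ 2) / 2 = 1/3 := by
    rw [piece_left _ (fun x => 0 + (-1) * x + (-(1:ℝ)/2) * x ^ 2)
      (fun x hx => by rw [fP_left hx]; ring), poly2]
    norm_num
  have p2 : ∫ x in (0:ℝ)..1, (1 - fP x ^ 2) / 2 = 0 := by
    rw [piece_right _ (fun x => 0 + 0 * x + 0 * x ^ 2)
      (fun x hx => by rw [fP_right hx]; ring), poly2]
    norm_num
  rw [h, setIntegral_congr_fun measurableSet_Icc
      (g := fun x => (1 - fP x ^ 2) / 2) (fun x hx => inner_id (fP x) (fP_le_one hx)),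
    outer_split (fun x => (1 - fP x ^ 2) / 2) (by fun_prop), p1, p2]
  norm_num

/-- The barycenter (with respect to 2-dimensional Lebesgue measure) of the polytope
`P₂ = conv{(0,-1), (-1,0), (-1,1), (1,1), (1,-1)} ⊆ ℝ²` equals `(2/21, 2/21)`: the
vector-valued integral `∫_{P₂} x dx` equals `(2/21, 2/21)` times the Lebesgue measure
of `P₂`. -/
theorem barycenter_P2 (P₂ : Set (ℝ × ℝ))
    (hP₂ : P₂ = convexHull ℝ {(0, -1), (-1, 0), (-1, 1), (1, 1), (1, -1)}) :
    (∫ x in P₂, x ∂volume) = (volume P₂).toReal • ((2/21, 2/21) : ℝ × ℝ) := by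
  have hS : P₂ = SP := by rw [hP₂, ← hull_eq]
  subst hS
  have hInt : IntegrableOn (fun p : ℝ × ℝ => p) SP volume :=
    continuous_id.continuousOn.integrableOn_compact SP_compact
  have hvol : (volume SP).toReal = 7/2 := by
    have h := (setIntegral_const (μ := volume) (s := SP) (1:ℝ)).symm.trans area_SP
    simp at h; exact h
  have h1 : (∫ p in SP, p ∂volume) = ((1/3 : ℝ), (1/3 : ℝ)) := by
    have hf := ((ContinuousLinearMap.fst ℝ ℝ ℝ).integral_comp_comm hInt).symm
    have hs := ((ContinuousLinearMap.snd ℝ ℝ ℝ).integral_comp_comm hInt).symm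
    simp only [ContinuousLinearMap.coe_fst', ContinuousLinearMap.coe_snd'] at hf hs
    apply Prod.ext
    · rw [hf]; exact fst_SP
    · rw [hs]; exact snd_SP
  rw [h1, hvol]
  norm_num [Prod.ext_iff, Prod.smul_fst, Prod.smul_snd, smul_eq_mul]

end Aux
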